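/- Let θ be a nonempty rim with θ̂ ≠ ∅ whose north-east arm is not connected to θ̂, and set a = |θ| - |θ̂|. Then for every integer p ≥ 1: if a = 1 then C(θ,p) = 2·C(θ̂,p-1) - 2·C(θ̂,p), and if a > 1 then C(θ,p) = 2·C(θ̂,p-a) - 3·C(θ̂,p-a+1) + C(θ̂,p-a+2). -/

import Mathlib

/-- `hcoef a b = Σ_{j=0}^{min(a,b)} (-1)^j 2^{a-j} binom(a,j)`; it is `0` when `b < 0`. -/
def hcoef (a : ℕ) (b : ℤ) : ℤ :=
  ∑ j ∈ Finset.range (a + 1),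
    if (j : ℤ) ≤ b then (-1) ^ j * 2 ^ (a - j) * (a.choose j) else 0

attribute [local instance] Classical.propDecidable

/-- The south-east corners of a finite set of boxes: boxes `(i,j)` such that
neither `(i+1,j)` nor `(i,j+1)` belongs to the set. -/
def seCorners (θ : Finset (ℤ × ℤ)) : Finset (ℤ × ℤ) :=
  θ.filter fun b => (b.1 + 1, b.2) ∉ θ ∧ (b.1, b.2 + 1) ∉ θ

/-- The south-east rim of `θ`: boxes `(i,j) ∈ θ` such that no box `(i',j') ∈ θ`
has `i' > i` and `j' > j`. -/
def seRim (θ : Finset (ℤ × ℤ)) : Finset (ℤ × ℤ) :=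
  θ.filter fun b => ∀ b' ∈ θ, ¬ (b.1 < b'.1 ∧ b.2 < b'.2)

/-- `d(θ)`: the number of boxes in the south-east rim of `θ`. -/
def dRim (θ : Finset (ℤ × ℤ)) : ℕ := (seRim θ).card

/-- `θ` is a rim if it equals its own south-east rim. -/
def IsRim (θ : Finset (ℤ × ℤ)) : Prop := θ = seRim θ

/-- Two boxes are adjacent (connected) if they share a side. -/
def Adjacent (b b' : ℤ × ℤ) : Prop := |b.1 - b'.1| + |b.2 - b'.2| = 1

/-- `b'` can be reached from `b` by a chain of adjacent boxes of `θ`. -/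
def Reach (θ : Finset (ℤ × ℤ)) (b b' : ℤ × ℤ) : Prop :=
  Relation.ReflTransGen (fun x y => y ∈ θ ∧ Adjacent x y) b b'

/-- The connected components of `θ`. -/
noncomputable def comps (θ : Finset (ℤ × ℤ)) : Finset (Finset (ℤ × ℤ)) :=
  θ.image fun b => θ.filter fun b' => Reach θ b b'

/-- `N(θ)`: the number of connected components of `θ`. -/
noncomputable def Ncomp (θ : Finset (ℤ × ℤ)) : ℕ := (comps θ).card

/-- `N⁻(θ) = max(N(θ) - 1, 0)`. -/
noncomputable def Nminus (θ : Finset (ℤ × ℤ)) : ℕ := Ncomp θ - 1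

/-- `N'(θ)`: the number of connected components of `θ` containing no diagonal box. -/
noncomputable def Nprime (θ : Finset (ℤ × ℤ)) : ℕ :=
  ((comps θ).filter fun c => ∀ b ∈ c, b.1 ≠ b.2).card

/-- `B(θ,p) = Σ_S (-1)^{|S|} h(N⁻(θ∖S), d(θ∖S) - p)`, the sum over subsets `S`
of the set of south-east corners of `θ`. -/
noncomputable def Bcoef (θ : Finset (ℤ × ℤ)) (p : ℤ) : ℤ :=
  ∑ S ∈ (seCorners θ).powerset,
    (-1) ^ S.card * hcoef (Nminus (θ \ S)) ((dRim (θ \ S) : ℤ) - p)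

/-- `C(θ,p) = Σ_S (-1)^{|S|} h(N'(θ∖S), d(θ∖S) - p)`, the sum over subsets `S`
of the set of south-east corners of `θ`. -/
noncomputable def Ccoef (θ : Finset (ℤ × ℤ)) (p : ℤ) : ℤ :=
  ∑ S ∈ (seCorners θ).powerset,
    (-1) ^ S.card * hcoef (Nprime (θ \ S)) ((dRim (θ \ S) : ℤ) - p)

/-- A strict partition with largest part at most `n`, encoded as a function
with `lam i = 0` for `i` beyond the length. -/
def IsStrictPartition (n : ℕ) (lam : ℤ → ℤ) : Prop :=
  lam 1 ≤ (n : ℤ) ∧ (∀ i : ℤ, 1 ≤ i → 0 ≤ lam i) ∧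
  (∀ i : ℤ, 1 ≤ i → lam (i + 1) = 0 ∨ lam (i + 1) < lam i)

/-- The shifted Young diagram `{(i,j) : 1 ≤ i ≤ ℓ, i ≤ j ≤ λ_i + i - 1}` of a
strict partition. -/
noncomputable def shiftedD (n : ℕ) (lam : ℤ → ℤ) : Finset (ℤ × ℤ) :=
  (Finset.Icc (1 : ℤ) (n : ℤ) ×ˢ Finset.Icc (1 : ℤ) (2 * (n : ℤ))).filter
    fun b => b.1 ≤ b.2 ∧ b.2 ≤ lam b.1 + b.1 - 1

/-- `θ` is a shifted skew diagram: `θ = ν/λ` for strict partitions `λ ⊆ ν`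
with `ν_1 ≤ n`. -/
def IsShiftedSkewDiagram (n : ℕ) (θ : Finset (ℤ × ℤ)) : Prop :=
  ∃ lam nu : ℤ → ℤ, IsStrictPartition n lam ∧ IsStrictPartition n nu ∧
    (∀ i : ℤ, 1 ≤ i → lam i ≤ nu i) ∧ θ = shiftedD n nu \ shiftedD n lam

/-- All boxes of `φ` lie in a single row. -/
def IsRow (φ : Finset (ℤ × ℤ)) : Prop := ∃ i : ℤ, ∀ b ∈ φ, b.1 = i

/-- All boxes of `φ` lie in a single column. -/
def IsCol (φ : Finset (ℤ × ℤ)) : Prop := ∃ j : ℤ, ∀ b ∈ φ, b.2 = j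

/-- `φ` is a row or a column. -/
def IsRowOrCol (φ : Finset (ℤ × ℤ)) : Prop := IsRow φ ∨ IsCol φ

/-- The intersection of `θ` with the `s × s` square whose upper-right box
is `(i0, j0)`. -/
def armAt (θ : Finset (ℤ × ℤ)) (i0 j0 : ℤ) (s : ℕ) : Finset (ℤ × ℤ) :=
  θ.filter fun b =>
    i0 ≤ b.1 ∧ b.1 ≤ i0 + (s : ℤ) - 1 ∧ j0 - (s : ℤ) + 1 ≤ b.2 ∧ b.2 ≤ j0

/-!
The arm `A` of `θ` is an interval `[lo, c]` of a row or a column; it contains no diagonal box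
(otherwise the rim condition would force all of `θ` into the arm), and it is not adjacent to `θ̂`.
Hence the south-east corners of `θ` are those of `θ̂` together with `c`, removing corners of `θ̂`
adds `N'(A) = 1` to `N'`, and in a rim `d` just counts boxes. Pairing each `S` with `S ∪ {c}`
in the sum defining `C(θ,p)` leaves `h(N' + 1, ·) - h(N'(A ∖ c) + N', ·)` with `N'(A ∖ c)`
equal to `0` or `1` according as `a = 1` or `a > 1`, and the recurrence
`h(m+1, b) = 2 h(m, b) - h(m, b-1)` rewrites this in terms of the summands of `C(θ̂, ·)`.
-/

section Components

theorem Adjacent.symm {b b' : ℤ × ℤ} (h : Adjacent b b') : Adjacent b' b := by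
  rwa [Adjacent, abs_sub_comm b'.1, abs_sub_comm b'.2]

theorem adjacent_add_fst (b : ℤ × ℤ) : Adjacent b (b.1 + 1, b.2) := by simp [Adjacent]

theorem adjacent_add_snd (b : ℤ × ℤ) : Adjacent b (b.1, b.2 + 1) := by simp [Adjacent]

variable {A X : Finset (ℤ × ℤ)} {b b' : ℤ × ℤ}

theorem Reach.mem (hb : b ∈ X) (h : Reach X b b') : b' ∈ X := by
  induction h with
  | refl => exact hb
  | tail _ hstep _ => exact hstep.1

theorem Reach.mono (hXA : X ⊆ A) (h : Reach X b b') : Reach A b b' :=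
  Relation.ReflTransGen.mono (fun _ _ hxy => ⟨hXA hxy.1, hxy.2⟩) _ _ h

theorem Reach.symm (hb : b ∈ X) (h : Reach X b b') : Reach X b' b := by
  induction h with
  | refl => exact Relation.ReflTransGen.refl
  | tail hbx hstep ih =>
    exact Relation.ReflTransGen.head ⟨Reach.mem hb hbx, hstep.2.symm⟩ ih

theorem Reach.of_union_of_not_adjacent (hnadj : ∀ x ∈ A, ∀ y ∈ X, ¬ Adjacent x y)
    (hb : b ∈ A) (h : Reach (A ∪ X) b b') : Reach A b b' := by
  induction h with
  | refl => exact Relation.ReflTransGen.refl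
  | tail _ hstep ih =>
    refine ih.tail ⟨?_, hstep.2⟩
    exact (Finset.mem_union.1 hstep.1).resolve_right fun hX =>
      hnadj _ (Reach.mem hb ih) _ hX hstep.2

theorem comps_union (hnadj : ∀ x ∈ A, ∀ y ∈ X, ¬ Adjacent x y) :
    comps (A ∪ X) = comps A ∪ comps X := by
  have hcomp : ∀ {A X : Finset (ℤ × ℤ)}, (∀ x ∈ A, ∀ y ∈ X, ¬ Adjacent x y) → ∀ b ∈ A,
      ((A ∪ X).filter fun b' => Reach (A ∪ X) b b') = A.filter fun b' => Reach A b b' := by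
    intro A X hnadj b hb
    ext b'
    simp only [Finset.mem_filter]
    refine ⟨fun ⟨_, h⟩ => ?_, fun ⟨h₁, h₂⟩ =>
      ⟨Finset.mem_union_left _ h₁, h₂.mono Finset.subset_union_left⟩⟩
    have h' := h.of_union_of_not_adjacent hnadj hb
    exact ⟨h'.mem hb, h'⟩
  have hnadj' : ∀ x ∈ X, ∀ y ∈ A, ¬ Adjacent x y := fun x hx y hy h => hnadj y hy x hx h.symm
  rw [comps, Finset.image_union]
  congr 1
  · exact Finset.image_congr (hcomp hnadj)
  · rw [Finset.union_comm]
    exact Finset.image_congr (hcomp hnadj')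

theorem Nprime_union (hdisj : Disjoint A X) (hnadj : ∀ x ∈ A, ∀ y ∈ X, ¬ Adjacent x y) :
    Nprime (A ∪ X) = Nprime A + Nprime X := by
  have hsub : ∀ {Y c}, c ∈ comps Y → c ⊆ Y ∧ c.Nonempty := by
    rintro Y c hc
    obtain ⟨b, hb, rfl⟩ := Finset.mem_image.1 hc
    exact ⟨Finset.filter_subset _ _, b, Finset.mem_filter.2 ⟨hb, Relation.ReflTransGen.refl⟩⟩
  rw [Nprime, Nprime, Nprime, comps_union hnadj, Finset.filter_union]
  refine Finset.card_union_of_disjoint (Finset.disjoint_left.2 fun c hcA hcX => ?_)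
  obtain ⟨hcA, b, hb⟩ := hsub (Finset.mem_filter.1 hcA).1
  exact Finset.disjoint_left.1 hdisj (hcA hb) ((hsub (Finset.mem_filter.1 hcX).1).1 hb)

theorem Nprime_empty : Nprime ∅ = 0 := by simp [Nprime, comps]

theorem Nprime_eq_one (hne : X.Nonempty) (hconn : ∀ b ∈ X, ∀ b' ∈ X, Reach X b b')
    (hdiag : ∀ b ∈ X, b.1 ≠ b.2) : Nprime X = 1 := by
  have hcomps : comps X = {X} := by
    rw [comps, Finset.image_congr fun b hb => Finset.filter_true_of_mem (hconn b hb)]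
    exact Finset.image_const hne X
  rw [Nprime, hcomps, Finset.filter_singleton, if_pos hdiag, Finset.card_singleton]

end Components

section Rectangles

variable {lo hi : ℤ × ℤ}

theorem reach_Icc_right {b : ℤ × ℤ} (hb : b ∈ Finset.Icc lo hi) :
    Reach (Finset.Icc lo hi) b hi := by
  obtain ⟨k, hk⟩ : ∃ k : ℕ, (k : ℤ) = hi.1 - b.1 + (hi.2 - b.2) := ⟨_, Int.toNat_of_nonneg (by
    simp only [Finset.mem_Icc, Prod.le_def] at hb; omega)⟩
  induction k generalizing b with
  | zero =>
    simp only [Finset.mem_Icc, Prod.le_def] at hb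
    obtain rfl : b = hi := Prod.ext (by omega) (by omega)
    exact Relation.ReflTransGen.refl
  | succ k ih =>
    simp only [Finset.mem_Icc, Prod.le_def] at hb
    rcases lt_or_ge b.1 hi.1 with h | h
    · refine Relation.ReflTransGen.head ⟨?_, adjacent_add_fst b⟩ (ih ?_ ?_) <;>
        simp only [Finset.mem_Icc, Prod.le_def] <;> push_cast at hk ⊢ <;> omega
    · refine Relation.ReflTransGen.head ⟨?_, adjacent_add_snd b⟩ (ih ?_ ?_) <;>
        simp only [Finset.mem_Icc, Prod.le_def] <;> push_cast at hk ⊢ <;> omega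

theorem Nprime_Icc (hle : lo ≤ hi) (hdiag : ∀ b ∈ Finset.Icc lo hi, b.1 ≠ b.2) :
    Nprime (Finset.Icc lo hi) = 1 :=
  Nprime_eq_one (Finset.nonempty_Icc.2 hle)
    (fun _ hb _ hb' => (reach_Icc_right hb).trans ((reach_Icc_right hb').symm hb')) hdiag

theorem seCorners_Icc (hle : lo ≤ hi) : seCorners (Finset.Icc lo hi) = {hi} := by
  ext b
  simp only [seCorners, Finset.mem_filter, Finset.mem_Icc, Prod.le_def, Finset.mem_singleton,
    Prod.ext_iff]
  rw [Prod.le_def] at hle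
  omega

theorem Icc_erase_right (hline : lo.1 = hi.1 ∨ lo.2 = hi.2) :
    ∃ hi', (Finset.Icc lo hi).erase hi = Finset.Icc lo hi' := by
  rcases hline with h | h
  · refine ⟨(hi.1, hi.2 - 1), ?_⟩
    ext b
    simp only [Finset.mem_erase, Finset.mem_Icc, Prod.le_def, ne_eq, Prod.ext_iff]
    omega
  · refine ⟨(hi.1 - 1, hi.2), ?_⟩
    ext b
    simp only [Finset.mem_erase, Finset.mem_Icc, Prod.le_def, ne_eq, Prod.ext_iff]
    omega

theorem Nprime_Icc_erase_right (hline : lo.1 = hi.1 ∨ lo.2 = hi.2)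
    (hdiag : ∀ b ∈ Finset.Icc lo hi, b.1 ≠ b.2) (hcard : 1 < (Finset.Icc lo hi).card) :
    Nprime ((Finset.Icc lo hi).erase hi) = 1 := by
  have hle : lo ≤ hi := Finset.nonempty_Icc.1 (Finset.card_pos.1 (by omega))
  have hne : ((Finset.Icc lo hi).erase hi).Nonempty := by
    rw [← Finset.card_pos, Finset.card_erase_of_mem (Finset.right_mem_Icc.2 hle)]; omega
  obtain ⟨hi', hi'_eq⟩ := Icc_erase_right hline
  rw [hi'_eq] at hne ⊢
  exact Nprime_Icc (Finset.nonempty_Icc.1 hne)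
    (fun b hb => hdiag b (Finset.mem_of_mem_erase (hi'_eq ▸ hb)))

theorem IsRowOrCol.eq_Icc {A : Finset (ℤ × ℤ)} (hA : IsRowOrCol A) (hne : A.Nonempty)
    (hconv : ∀ b ∈ A, ∀ b' ∈ A, ∀ x, b ≤ x → x ≤ b' → x ∈ A) :
    ∃ lo hi, lo ≤ hi ∧ (lo.1 = hi.1 ∨ lo.2 = hi.2) ∧ A = Finset.Icc lo hi := by
  have hchain : ∀ x ∈ A, ∀ y ∈ A, x ≤ y ∨ y ≤ x := by
    intro x hx y hy
    simp only [Prod.le_def]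
    rcases hA with ⟨i, hi⟩ | ⟨j, hj⟩
    · have := hi x hx; have := hi y hy; omega
    · have := hj x hx; have := hj y hy; omega
  have hlo : A.inf' hne id ∈ A := by
    refine Finset.inf'_mem (A : Set (ℤ × ℤ)) (fun x hx y hy => ?_) A hne id fun _ h => h
    rcases hchain x hx y hy with h | h
    · rwa [inf_eq_left.2 h]
    · rwa [inf_eq_right.2 h]
  have hhi : A.sup' hne id ∈ A := by
    refine Finset.sup'_mem (A : Set (ℤ × ℤ)) (fun x hx y hy => ?_) A hne id fun _ h => h
    rcases hchain x hx y hy with h | h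
    · rwa [sup_eq_right.2 h]
    · rwa [sup_eq_left.2 h]
  refine ⟨A.inf' hne id, A.sup' hne id, Finset.inf'_le id hhi, ?_, ?_⟩
  · rcases hA with ⟨i, hi⟩ | ⟨j, hj⟩
    · exact Or.inl ((hi _ hlo).trans (hi _ hhi).symm)
    · exact Or.inr ((hj _ hlo).trans (hj _ hhi).symm)
  · ext b
    rw [Finset.mem_Icc]
    exact ⟨fun hb => ⟨Finset.inf'_le id hb, Finset.le_sup' id hb⟩,
      fun ⟨h₁, h₂⟩ => hconv _ hlo _ hhi b h₁ h₂⟩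

end Rectangles

section ShiftedSkew

variable {n : ℕ}

theorem IsStrictPartition.add_sub_le {mu : ℤ → ℤ} (h : IsStrictPartition n mu) {i i' : ℤ}
    (hi : 1 ≤ i) (hii' : i ≤ i') (hpos : 0 < mu i') : mu i' + (i' - i) ≤ mu i := by
  induction i', hii' using Int.leInduction with
  | base => simp
  | succ k hik ih =>
    have := h.2.2 k (by omega)
    have := ih (by omega)
    omega

theorem IsStrictPartition.mem_shiftedD_of_le {mu : ℤ → ℤ} (h : IsStrictPartition n mu)
    {x y : ℤ × ℤ} (hx : x ∈ shiftedD n mu) (hyx : y ≤ x) (hy₁ : 1 ≤ y.1) (hy : y.1 ≤ y.2) :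
    y ∈ shiftedD n mu := by
  simp only [shiftedD, Finset.mem_filter, Finset.mem_product, Finset.mem_Icc] at hx ⊢
  rw [Prod.le_def] at hyx
  have := h.add_sub_le hy₁ hyx.1 (by omega)
  omega

variable {θ : Finset (ℤ × ℤ)} {b b' x : ℤ × ℤ}

theorem IsShiftedSkewDiagram.fst_le_snd (hθ : IsShiftedSkewDiagram n θ) (hb : b ∈ θ) :
    b.1 ≤ b.2 := by
  obtain ⟨_, _, _, _, _, rfl⟩ := hθ
  simp only [shiftedD, Finset.mem_sdiff, Finset.mem_filter] at hb
  exact hb.1.2.1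

theorem IsShiftedSkewDiagram.mem_of_le_of_le (hθ : IsShiftedSkewDiagram n θ) (hb : b ∈ θ)
    (hb' : b' ∈ θ) (hbx : b ≤ x) (hxb' : x ≤ b') (hx : x.1 ≤ x.2) : x ∈ θ := by
  obtain ⟨lam, nu, hlam, hnu, _, rfl⟩ := hθ
  rw [Finset.mem_sdiff] at hb hb' ⊢
  have hb₁ : 1 ≤ b.1 ∧ b.1 ≤ b.2 := by
    simp only [shiftedD, Finset.mem_filter, Finset.mem_product, Finset.mem_Icc] at hb
    omega
  have hx₁ : 1 ≤ x.1 := hb₁.1.trans (Prod.le_def.1 hbx).1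
  exact ⟨hnu.mem_shiftedD_of_le hb'.1 hxb' hx₁ hx,
    fun hxlam => hb.2 (hlam.mem_shiftedD_of_le hxlam hbx hb₁.1 hb₁.2)⟩

end ShiftedSkew

section Hcoef

def hcoefTerm (a : ℕ) (b : ℤ) (j : ℕ) : ℤ :=
  if (j : ℤ) ≤ b then (-1) ^ j * 2 ^ (a - j) * (a.choose j) else 0

theorem hcoef_eq_sum_hcoefTerm (a : ℕ) (b : ℤ) :
    hcoef a b = ∑ j ∈ Finset.range (a + 1), hcoefTerm a b j := rfl

theorem hcoefTerm_succ_succ (m : ℕ) (b : ℤ) (j : ℕ) :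
    hcoefTerm (m + 1) b (j + 1) = 2 * hcoefTerm m b (j + 1) - hcoefTerm m (b - 1) j := by
  simp only [hcoefTerm, Nat.choose_succ_succ', Nat.add_sub_add_right]
  rcases lt_trichotomy j m with h | rfl | h
  · obtain ⟨k, rfl⟩ := Nat.exists_eq_add_of_lt h
    rw [show j + k + 1 - j = k + 1 by omega, show j + k + 1 - (j + 1) = k by omega]
    push_cast
    split_ifs <;> first | omega | ring
  · simp only [Nat.choose_succ_self, Nat.sub_self]
    push_cast
    split_ifs <;> first | omega | ring
  · simp only [Nat.choose_eq_zero_of_lt h, Nat.choose_eq_zero_of_lt (h.trans (Nat.lt_succ_self j))]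
    split_ifs <;> simp

theorem hcoef_succ (m : ℕ) (b : ℤ) : hcoef (m + 1) b = 2 * hcoef m b - hcoef m (b - 1) := by
  have hzero : hcoefTerm (m + 1) b 0 = 2 * hcoefTerm m b 0 := by
    simp only [hcoefTerm, Nat.choose_zero_right, Nat.sub_zero]
    split_ifs <;> ring
  have hlast : hcoefTerm m b (m + 1) = 0 := by simp [hcoefTerm]
  -- pad `hcoef m b` with the vanishing term `j = m + 1`, then apply Pascal's rule termwise
  have hshift :
      hcoef m b = ∑ j ∈ Finset.range (m + 1), hcoefTerm m b (j + 1) + hcoefTerm m b 0 := by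
    rw [← Finset.sum_range_succ', Finset.sum_range_succ, hlast, add_zero, hcoef_eq_sum_hcoefTerm]
  rw [hshift, hcoef_eq_sum_hcoefTerm, hcoef_eq_sum_hcoefTerm, Finset.sum_range_succ', hzero]
  simp only [hcoefTerm_succ_succ, Finset.sum_sub_distrib, ← Finset.mul_sum]
  ring

end Hcoef

section Coefficients

variable {θ A X : Finset (ℤ × ℤ)} {c : ℤ × ℤ}

theorem seCorners_union (hnadj : ∀ x ∈ A, ∀ y ∈ X, ¬ Adjacent x y) :
    seCorners (A ∪ X) = seCorners A ∪ seCorners X := by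
  ext b
  have hA₁ : b ∈ A → (b.1 + 1, b.2) ∉ X := fun hb h => hnadj b hb _ h (adjacent_add_fst b)
  have hA₂ : b ∈ A → (b.1, b.2 + 1) ∉ X := fun hb h => hnadj b hb _ h (adjacent_add_snd b)
  have hX₁ : b ∈ X → (b.1 + 1, b.2) ∉ A := fun hb h => hnadj _ h b hb (adjacent_add_fst b).symm
  have hX₂ : b ∈ X → (b.1, b.2 + 1) ∉ A := fun hb h => hnadj _ h b hb (adjacent_add_snd b).symm
  simp only [seCorners, Finset.mem_filter, Finset.mem_union]
  tauto

theorem IsRim.not_lt_and_lt (hrim : IsRim θ) {b b' : ℤ × ℤ} (hb : b ∈ θ) (hb' : b' ∈ θ) :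
    ¬ (b.1 < b'.1 ∧ b.2 < b'.2) := by
  rw [hrim, seRim] at hb
  exact (Finset.mem_filter.1 hb).2 b' hb'

theorem IsRim.dRim_eq_card (hrim : IsRim θ) {T : Finset (ℤ × ℤ)} (hT : T ⊆ θ) :
    dRim T = T.card := by
  rw [dRim, seRim, Finset.filter_true_of_mem]
  exact fun b hb b' hb' => hrim.not_lt_and_lt (hT hb) (hT hb')

theorem Ccoef_eq_sum_of_isRim (hrim : IsRim θ) (hX : X ⊆ θ) (q : ℤ) :
    Ccoef X q = ∑ S ∈ (seCorners X).powerset,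
      (-1) ^ S.card * hcoef (Nprime (X \ S)) ((X \ S).card - q) :=
  Finset.sum_congr rfl fun _ _ => by rw [hrim.dRim_eq_card (Finset.sdiff_subset.trans hX)]

theorem Ccoef_union_eq_sum (hrim : IsRim (A ∪ X)) (hdisj : Disjoint A X)
    (hnadj : ∀ x ∈ A, ∀ y ∈ X, ¬ Adjacent x y) (hc : seCorners A = {c}) (p : ℤ) :
    Ccoef (A ∪ X) p = ∑ S ∈ (seCorners X).powerset, (-1) ^ S.card *
      (hcoef (Nprime A + Nprime (X \ S)) (A.card + (X \ S).card - p) -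
        hcoef (Nprime (A.erase c) + Nprime (X \ S)) (A.card - 1 + (X \ S).card - p)) := by
  have hcA : c ∈ A := Finset.filter_subset _ _ (hc ▸ Finset.mem_singleton_self c)
  have hcX : c ∉ seCorners X := fun h =>
    Finset.disjoint_left.1 hdisj hcA (Finset.filter_subset _ _ h)
  rw [Ccoef, seCorners_union hnadj, hc, ← Finset.insert_eq, Finset.sum_powerset_insert hcX,
    ← Finset.sum_add_distrib]
  refine Finset.sum_congr rfl fun S hS => ?_
  have hSX : S ⊆ X := (Finset.mem_powerset.1 hS).trans (Finset.filter_subset _ _)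
  have hcS : c ∉ S := fun h => Finset.disjoint_left.1 hdisj hcA (hSX h)
  have hAS : Disjoint A S := Finset.disjoint_of_subset_right hSX hdisj
  have hsdiff : (A ∪ X) \ S = A ∪ (X \ S) := by
    rw [Finset.union_sdiff_distrib, Finset.sdiff_eq_self_of_disjoint hAS]
  have hsdiff' : (A ∪ X) \ insert c S = A.erase c ∪ (X \ S) := by
    ext b
    have : b ∈ A → b ∉ S := fun hb => Finset.disjoint_left.1 hAS hb
    have : b ∈ X → b ≠ c := fun hb h => Finset.disjoint_left.1 hdisj (h ▸ hcA) hb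
    simp only [Finset.mem_sdiff, Finset.mem_union, Finset.mem_insert, Finset.mem_erase]
    tauto
  have hdisj' : Disjoint A (X \ S) := Finset.disjoint_of_subset_right Finset.sdiff_subset hdisj
  have hnadj' : ∀ x ∈ A, ∀ y ∈ X \ S, ¬ Adjacent x y := fun x hx y hy =>
    hnadj x hx y (Finset.sdiff_subset hy)
  rw [hsdiff, hsdiff', Nprime_union hdisj' hnadj',
    Nprime_union (Finset.disjoint_of_subset_left (Finset.erase_subset _ _) hdisj')
      fun x hx => hnadj' x (Finset.mem_of_mem_erase hx),
    hrim.dRim_eq_card (hsdiff ▸ Finset.sdiff_subset),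
    hrim.dRim_eq_card (hsdiff' ▸ Finset.sdiff_subset),
    Finset.card_union_of_disjoint hdisj',
    Finset.card_union_of_disjoint (Finset.disjoint_of_subset_left (Finset.erase_subset _ _) hdisj'),
    Finset.card_erase_of_mem hcA, Finset.card_insert_of_notMem hcS,
    Nat.cast_add, Nat.cast_add, Nat.cast_pred (Finset.card_pos.2 ⟨c, hcA⟩)]
  ring

theorem Ccoef_union_of_card_eq_one (hrim : IsRim (A ∪ X)) (hdisj : Disjoint A X)
    (hnadj : ∀ x ∈ A, ∀ y ∈ X, ¬ Adjacent x y) (hc : seCorners A = {c})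
    (hA : Nprime A = 1) (hcard : A.card = 1) (p : ℤ) :
    Ccoef (A ∪ X) p = 2 * Ccoef X (p - 1) - 2 * Ccoef X p := by
  have hcA : c ∈ A := Finset.filter_subset _ _ (hc ▸ Finset.mem_singleton_self c)
  have herase : A.erase c = ∅ := by
    rw [← Finset.card_eq_zero, Finset.card_erase_of_mem hcA, hcard]
  have hX : X ⊆ A ∪ X := Finset.subset_union_right
  rw [Ccoef_union_eq_sum hrim hdisj hnadj hc, Ccoef_eq_sum_of_isRim hrim hX,
    Ccoef_eq_sum_of_isRim hrim hX, Finset.mul_sum, Finset.mul_sum, ← Finset.sum_sub_distrib]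
  refine Finset.sum_congr rfl fun S _ => ?_
  rw [hA, herase, Nprime_empty, hcard, add_comm 1, hcoef_succ]
  ring_nf

theorem Ccoef_union_of_one_lt_card (hrim : IsRim (A ∪ X)) (hdisj : Disjoint A X)
    (hnadj : ∀ x ∈ A, ∀ y ∈ X, ¬ Adjacent x y) (hc : seCorners A = {c})
    (hA : Nprime A = 1) (hAc : Nprime (A.erase c) = 1) (p : ℤ) :
    Ccoef (A ∪ X) p = 2 * Ccoef X (p - A.card) - 3 * Ccoef X (p - A.card + 1) +
      Ccoef X (p - A.card + 2) := by
  have hX : X ⊆ A ∪ X := Finset.subset_union_right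
  simp only [Ccoef_union_eq_sum hrim hdisj hnadj hc, Ccoef_eq_sum_of_isRim hrim hX,
    Finset.mul_sum, ← Finset.sum_sub_distrib, ← Finset.sum_add_distrib]
  refine Finset.sum_congr rfl fun S _ => ?_
  rw [hA, hAc, add_comm 1, hcoef_succ, hcoef_succ]
  ring_nf

end Coefficients

section Arm

variable {n : ℕ} {θ : Finset (ℤ × ℤ)} {i0 j0 : ℤ} {s : ℕ}

theorem armAt_subset : armAt θ i0 j0 s ⊆ θ := Finset.filter_subset _ _

theorem armAt_mem_of_le_of_le (hθ : IsShiftedSkewDiagram n θ)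
    (harm : IsRowOrCol (armAt θ i0 j0 s)) :
    ∀ b ∈ armAt θ i0 j0 s, ∀ b' ∈ armAt θ i0 j0 s, ∀ x, b ≤ x → x ≤ b' →
      x ∈ armAt θ i0 j0 s := by
  intro b hb b' hb' x hbx hxb'
  have hbθ : b ∈ θ := armAt_subset hb
  have hb'θ : b' ∈ θ := armAt_subset hb'
  have hx : x.1 ≤ x.2 := by
    have := hθ.fst_le_snd hbθ
    have := hθ.fst_le_snd hb'θ
    rw [Prod.le_def] at hbx hxb'
    rcases harm with ⟨i, hi⟩ | ⟨j, hj⟩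
    · have := hi b hb; have := hi b' hb'; omega
    · have := hj b hb; have := hj b' hb'; omega
  have hxθ := hθ.mem_of_le_of_le hbθ hb'θ hbx hxb' hx
  simp only [armAt, Finset.mem_filter, Prod.le_def] at hb hb' hbx hxb' ⊢
  exact ⟨hxθ, by omega⟩

theorem subset_armAt_of_diag (hθ : IsShiftedSkewDiagram n θ) (hrim : IsRim θ)
    (hbox : (i0, j0) ∈ θ) (htop : ∀ b ∈ θ, i0 ≤ b.1) (hright : ∀ b ∈ θ, b.1 = i0 → b.2 ≤ j0)
    {k : ℤ} (hk : (k, k) ∈ armAt θ i0 j0 s) : θ ⊆ armAt θ i0 j0 s := by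
  intro b hb
  have hkθ : (k, k) ∈ θ := armAt_subset hk
  have := hrim.not_lt_and_lt hkθ hb
  have := hrim.not_lt_and_lt hb hkθ
  have := hrim.not_lt_and_lt hbox hb
  have := htop b hb
  have := hright b hb
  have := hθ.fst_le_snd hb
  simp only [armAt, Finset.mem_filter] at hk ⊢
  exact ⟨hb, by omega⟩

end Arm

theorem Ccoef_arm_disconnected_general (n : ℕ) (θ : Finset (ℤ × ℤ))
    (hθ : IsShiftedSkewDiagram n θ) (hrim : IsRim θ)
    (i0 j0 : ℤ) (hbox : (i0, j0) ∈ θ) (htop : ∀ b ∈ θ, i0 ≤ b.1)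
    (hright : ∀ b ∈ θ, b.1 = i0 → b.2 ≤ j0)
    (s : ℕ) (hs : 1 ≤ s) (harm : IsRowOrCol (armAt θ i0 j0 s))
    (θhat : Finset (ℤ × ℤ)) (hθhat : θhat = θ \ armAt θ i0 j0 s)
    (hhatne : θhat.Nonempty)
    (hconn : ¬ ∃ b ∈ armAt θ i0 j0 s, ∃ b' ∈ θhat, Adjacent b b')
    (a : ℤ) (ha : a = (θ.card : ℤ) - (θhat.card : ℤ))
    (p : ℤ) :
    (a = 1 → Ccoef θ p = 2 * Ccoef θhat (p - 1) - 2 * Ccoef θhat p) ∧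
    (1 < a → Ccoef θ p =
      2 * Ccoef θhat (p - a) - 3 * Ccoef θhat (p - a + 1) + Ccoef θhat (p - a + 2)) := by
  have hsplit : θ = armAt θ i0 j0 s ∪ θhat := by
    rw [hθhat, Finset.union_sdiff_of_subset armAt_subset]
  have hdisj : Disjoint (armAt θ i0 j0 s) θhat := hθhat ▸ Finset.disjoint_sdiff
  have hnadj : ∀ x ∈ armAt θ i0 j0 s, ∀ y ∈ θhat, ¬ Adjacent x y :=
    fun x hx y hy h => hconn ⟨x, hx, y, hy, h⟩
  have hdiag : ∀ b ∈ armAt θ i0 j0 s, b.1 ≠ b.2 := by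
    rintro ⟨k, _⟩ hk (rfl : k = _)
    obtain ⟨b, hb⟩ := hhatne
    have hbθ : b ∈ θ := hsplit ▸ Finset.mem_union_right _ hb
    exact Finset.disjoint_left.1 hdisj (subset_armAt_of_diag hθ hrim hbox htop hright hk hbθ) hb
  have hbox_arm : (i0, j0) ∈ armAt θ i0 j0 s := by
    simp only [armAt, Finset.mem_filter]
    exact ⟨hbox, by omega⟩
  obtain ⟨lo, c, hle, hline, hA⟩ := harm.eq_Icc ⟨_, hbox_arm⟩ (armAt_mem_of_le_of_le hθ harm)
  rw [hA] at hsplit hdisj hnadj hdiag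
  have ha' : a = (Finset.Icc lo c).card := by
    rw [ha, hsplit, Finset.card_union_of_disjoint hdisj, Nat.cast_add, add_sub_cancel_right]
  rw [hsplit] at hrim ⊢
  refine ⟨fun h => ?_, fun h => ?_⟩
  · exact Ccoef_union_of_card_eq_one hrim hdisj hnadj (seCorners_Icc hle)
      (Nprime_Icc hle hdiag) (by omega) p
  · rw [ha']
    exact Ccoef_union_of_one_lt_card hrim hdisj hnadj (seCorners_Icc hle)
      (Nprime_Icc hle hdiag) (Nprime_Icc_erase_right hline hdiag (by omega)) p

/-- Let `θ` be a nonempty rim whose north-east arm is not connected to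
`θ̂ = θ` minus the arm, with `θ̂ ≠ ∅` and `a = |θ| - |θ̂|`.  Then for every
integer `p ≥ 1`: if `a = 1` then `C(θ,p) = 2·C(θ̂,p-1) - 2·C(θ̂,p)`, and if
`a > 1` then `C(θ,p) = 2·C(θ̂,p-a) - 3·C(θ̂,p-a+1) + C(θ̂,p-a+2)`. -/
theorem Ccoef_arm_disconnected (n : ℕ) (hn : 0 < n) (θ : Finset (ℤ × ℤ))
    (hθ : IsShiftedSkewDiagram n θ) (hrim : IsRim θ) (hne : θ.Nonempty)
    (i0 j0 : ℤ) (hbox : (i0, j0) ∈ θ) (htop : ∀ b ∈ θ, i0 ≤ b.1)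
    (hright : ∀ b ∈ θ, b.1 = i0 → b.2 ≤ j0)
    (s : ℕ) (hs : 1 ≤ s) (harm : IsRowOrCol (armAt θ i0 j0 s))
    (hmax : ∀ s' : ℕ, 1 ≤ s' → IsRowOrCol (armAt θ i0 j0 s') → s' ≤ s)
    (θhat : Finset (ℤ × ℤ)) (hθhat : θhat = θ \ armAt θ i0 j0 s)
    (hhatne : θhat.Nonempty)
    (hconn : ¬ ∃ b ∈ armAt θ i0 j0 s, ∃ b' ∈ θhat, Adjacent b b')
    (a : ℤ) (ha : a = (θ.card : ℤ) - (θhat.card : ℤ))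
    (p : ℤ) (hp : 1 ≤ p) :
    (a = 1 → Ccoef θ p = 2 * Ccoef θhat (p - 1) - 2 * Ccoef θhat p) ∧
    (1 < a → Ccoef θ p =
      2 * Ccoef θhat (p - a) - 3 * Ccoef θhat (p - a + 1) + Ccoef θhat (p - a + 2)) :=
  Ccoef_arm_disconnected_general n θ hθ hrim i0 j0 hbox htop hright s hs harm θhat hθhat hhatne
    hconn a ha p
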